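/- Assume the CRK setup and all hypotheses of Theorem 3.2 (skew-symmetric M, K, L, skew-symmetric differentiation matrices D_x of size N×N and D_y of size M̃×M̃, S continuously differentiable in its first argument, Δt > 0, continuous δ_t z_{jl} : [0,1] → ℝ^d, z_{jl}(τ) = z_{jl}⁰ + Δt ∫₀¹ A_{τ,σ} δ_t z_{jl}(σ) dσ, z_{jl}¹ = z_{jl}⁰ + Δt ∫₀¹ δ_t z_{jl}(σ) dσ, δ_x z_{jl}(τ) = Σ_k (D_x)_{jk} z_{kl}(τ), δ_y z_{jl}(τ) = Σ_m (D_y)_{lm} z_{jm}(τ), and M δ_t z_{jl}(τ) + K δ_x z_{jl}(τ) + L δ_y z_{jl}(τ) = ∇_z S(z_{jl}(τ), x_j, y_l) for all τ, j, l). Then the discrete global energy is exactly conserved: Σ_{j=0}^{N−1} Σ_{l=0}^{M̃−1} E_{jl}¹ = Σ_{j=0}^{N−1} Σ_{l=0}^{M̃−1} E_{jl}⁰, where E_{jl}^α = S(z_{jl}^α, x_j, y_l) − (1/2) (z_{jl}^α)ᵀ K δ_x z_{jl}^α − (1/2) (z_{jl}^α)ᵀ L δ_y z_{jl}^α for α ∈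 {0,1}. -/

import Mathlib

open scoped Matrix

noncomputable def dotCLM {d : ℕ} (g : Fin d → ℝ) : (Fin d → ℝ) →L[ℝ] ℝ :=
  ∑ i : Fin d, g i • (ContinuousLinearMap.proj i : (Fin d → ℝ) →L[ℝ] ℝ)

noncomputable def lag {s : ℕ} (c : Fin s → ℝ) (i : Fin s) (τ : ℝ) : ℝ :=
  (Lagrange.basis (Finset.univ : Finset (Fin s)) c i).eval τ

noncomputable def bw {s : ℕ} (c : Fin s → ℝ) (i : Fin s) : ℝ :=
  ∫ τ in (0:ℝ)..1, lag c i τ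

noncomputable def Acrk {s : ℕ} (c : Fin s → ℝ) (τ σ : ℝ) : ℝ :=
  ∑ i : Fin s, (1 / bw c i) * (∫ α in (0:ℝ)..τ, lag c i α) * lag c i σ

noncomputable def wavg {s : ℕ} (c : Fin s → ℝ) (i : Fin s) {G : Type*}
    [NormedAddCommGroup G] [NormedSpace ℝ G] (f : ℝ → G) : G :=
  (1 / bw c i) • ∫ τ in (0:ℝ)..1, lag c i τ • f τ

/-!
Along the stage trajectory `z(τ) = z⁰ + Δt ∫₀¹ A_{τ,σ} δₜz(σ) dσ` we have
`ż(τ) = Δt ∑ᵢ lᵢ(τ) ⟨δₜz⟩ᵢ` and, since `∑ᵢ lᵢ = 1`, `z(1) = z¹`. Both quadratic parts of the energy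
are symmetric pairings (a skew-symmetric `K` against a skew-symmetric `Dₓ`, likewise `L`, `D_y`), so
the energy changes at the rate `∑ ż ⬝ (∇S - K δₓz - L δ_y z) = ∑ ż ⬝ M δₜz` by the collocation
condition. Integrating over `[0, 1]`, each weight `lᵢ` turns `δₜz` into `bᵢ ⟨δₜz⟩ᵢ`, leaving
`Δt ∑ᵢ bᵢ ⟨δₜz⟩ᵢ ⬝ M ⟨δₜz⟩ᵢ = 0` by skew-symmetry of `M`.
-/

open Finset

lemma dotCLM_apply {d : ℕ} (g v : Fin d → ℝ) : dotCLM g v = g ⬝ᵥ v := by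
  simp [dotCLM, dotProduct]

section SkewSymmetric

variable {d : ℕ} {K : Matrix (Fin d) (Fin d) ℝ}

lemma dotProduct_mulVec_eq_neg_of_transpose_eq_neg (hK : Kᵀ = -K) (a b : Fin d → ℝ) :
    a ⬝ᵥ K *ᵥ b = -(b ⬝ᵥ K *ᵥ a) := by
  rw [Matrix.dotProduct_mulVec, ← Matrix.mulVec_transpose, hK, Matrix.neg_mulVec,
    neg_dotProduct, dotProduct_comm]

lemma dotProduct_mulVec_self_eq_zero_of_transpose_eq_neg (hK : Kᵀ = -K) (a : Fin d → ℝ) :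
    a ⬝ᵥ K *ᵥ a = 0 := by
  linarith [dotProduct_mulVec_eq_neg_of_transpose_eq_neg hK a a]

lemma sum_dotProduct_mulVec_sum_comm {ι : Type*} [Fintype ι] (hK : Kᵀ = -K)
    {D : Matrix ι ι ℝ} (hD : Dᵀ = -D) (a b : ι → Fin d → ℝ) :
    ∑ j, a j ⬝ᵥ K *ᵥ ∑ k, D j k • b k = ∑ j, b j ⬝ᵥ K *ᵥ ∑ k, D j k • a k := by
  have hD' : ∀ j k, D k j = -D j k := fun j k => by
    simpa using congrFun (congrFun hD j) k
  simp only [Matrix.mulVec_sum, Matrix.mulVec_smul, dotProduct_sum, dotProduct_smul, smul_eq_mul]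
  rw [Finset.sum_comm]
  refine sum_congr rfl fun j _ => sum_congr rfl fun k _ => ?_
  rw [hD', dotProduct_mulVec_eq_neg_of_transpose_eq_neg hK]
  ring

end SkewSymmetric

section Collocation

variable {s : ℕ} (c : Fin s → ℝ)

@[fun_prop]
lemma continuous_lag (i : Fin s) : Continuous (lag c i) :=
  Polynomial.continuous _

variable {G : Type*} [NormedAddCommGroup G] [NormedSpace ℝ G]

/-- `τ ↦ ∑ᵢ lᵢ(τ) ⟨f⟩ᵢ`, the derivative of the CRK stage polynomial driven by `f`. -/
noncomputable def lagAvg (f : ℝ → G) (τ : ℝ) : G :=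
  ∑ i, lag c i τ • wavg c i f

@[fun_prop]
lemma continuous_lagAvg (f : ℝ → G) : Continuous (lagAvg c f) := by
  unfold lagAvg
  fun_prop

variable {c}

lemma sum_lag_eq_one [Nonempty (Fin s)] (hc : Function.Injective c) (τ : ℝ) :
    ∑ i, lag c i τ = 1 := by
  simpa [lag, Polynomial.eval_finsetSum] using
    congrArg (Polynomial.eval τ) (Lagrange.sum_basis hc.injOn univ_nonempty)

lemma Acrk_one [Nonempty (Fin s)] (hc : Function.Injective c)
    (hb : ∀ i, bw c i ≠ 0) (σ : ℝ) : Acrk c 1 σ = 1 := by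
  unfold Acrk
  conv_rhs => rw [← sum_lag_eq_one hc σ]
  exact sum_congr rfl fun i _ => by
    rw [show ∫ α in (0:ℝ)..1, lag c i α = bw c i from rfl, one_div_mul_cancel (hb i), one_mul]

variable {f : ℝ → G}

lemma integral_Acrk_smul (hf : ContinuousOn f (Set.uIcc 0 1)) (τ : ℝ) :
    ∫ σ in (0:ℝ)..1, Acrk c τ σ • f σ = ∑ i, (∫ α in (0:ℝ)..τ, lag c i α) • wavg c i f := by
  simp only [Acrk, sum_smul]
  rw [intervalIntegral.integral_finsetSum]
  · refine sum_congr rfl fun i _ => ?_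
    rw [wavg, smul_smul, ← intervalIntegral.integral_smul]
    refine intervalIntegral.integral_congr fun σ _ => ?_
    simp only [smul_smul]
    ring_nf
  · exact fun i _ => ContinuousOn.intervalIntegrable
      ((continuous_const.mul (continuous_lag c i)).continuousOn.smul hf)

lemma hasDerivAt_integral_Acrk_smul (hf : ContinuousOn f (Set.uIcc 0 1)) (τ : ℝ) :
    HasDerivAt (fun τ => ∫ σ in (0:ℝ)..1, Acrk c τ σ • f σ) (lagAvg c f τ) τ := by
  simp only [integral_Acrk_smul hf]
  exact HasDerivAt.fun_sum fun i _ =>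
    ((continuous_lag c i).integral_hasStrictDerivAt 0 τ).hasDerivAt.smul_const _

lemma integral_lag_smul (hb : ∀ i, bw c i ≠ 0) (i : Fin s) :
    ∫ τ in (0:ℝ)..1, lag c i τ • f τ = bw c i • wavg c i f := by
  rw [wavg, smul_smul, mul_one_div_cancel (hb i), one_smul]

lemma integral_dotProduct_mulVec {d : ℕ} (M : Matrix (Fin d) (Fin d) ℝ) (v : Fin d → ℝ)
    {g : ℝ → Fin d → ℝ} {a b : ℝ} (hg : IntervalIntegrable g MeasureTheory.volume a b) :
    ∫ τ in a..b, v ⬝ᵥ M *ᵥ g τ = v ⬝ᵥ M *ᵥ ∫ τ in a..b, g τ := by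
  simpa only [dotCLM_apply, Matrix.dotProduct_mulVec] using
    (dotCLM (v ᵥ* M)).intervalIntegral_comp_comm hg

lemma integral_lagAvg_dotProduct_mulVec_eq_zero {d : ℕ} {M : Matrix (Fin d) (Fin d) ℝ}
    (hM : Mᵀ = -M) (hb : ∀ i, bw c i ≠ 0) {f : ℝ → Fin d → ℝ}
    (hf : ContinuousOn f (Set.uIcc 0 1)) :
    ∫ τ in (0:ℝ)..1, lagAvg c f τ ⬝ᵥ M *ᵥ f τ = 0 := by
  have hlf : ∀ i, ContinuousOn (fun τ => lag c i τ • f τ) (Set.uIcc 0 1) :=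
    fun i => (continuous_lag c i).continuousOn.smul hf
  calc ∫ τ in (0:ℝ)..1, lagAvg c f τ ⬝ᵥ M *ᵥ f τ
      = ∫ τ in (0:ℝ)..1, ∑ i, wavg c i f ⬝ᵥ M *ᵥ (lag c i τ • f τ) := by
        simp only [lagAvg, sum_dotProduct, smul_dotProduct, Matrix.mulVec_smul, dotProduct_smul]
    _ = ∑ i, wavg c i f ⬝ᵥ M *ᵥ (bw c i • wavg c i f) := by
        rw [intervalIntegral.integral_finsetSum]
        · refine sum_congr rfl fun i _ => ?_
          rw [integral_dotProduct_mulVec M _ (hlf i).intervalIntegrable, integral_lag_smul hb]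
        · exact fun i _ => ContinuousOn.intervalIntegrable (by fun_prop)
    _ = 0 := by
        simp only [Matrix.mulVec_smul, dotProduct_smul,
          dotProduct_mulVec_self_eq_zero_of_transpose_eq_neg hM, smul_zero, sum_const_zero]

end Collocation

section Energy

variable {d : ℕ}

lemma HasDerivAt.dotProduct_mulVec (K : Matrix (Fin d) (Fin d) ℝ) {f g : ℝ → Fin d → ℝ}
    {f' g' : Fin d → ℝ} {τ : ℝ} (hf : HasDerivAt f f' τ) (hg : HasDerivAt g g' τ) :
    HasDerivAt (fun t => f t ⬝ᵥ K *ᵥ g t) (f' ⬝ᵥ K *ᵥ g τ + f τ ⬝ᵥ K *ᵥ g') τ := by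
  have hf := hasDerivAt_pi.mp hf
  have hg := hasDerivAt_pi.mp hg
  have h := HasDerivAt.fun_sum fun p (_ : p ∈ univ) =>
    (hf p).mul (HasDerivAt.fun_sum fun q (_ : q ∈ univ) => (hg q).const_mul (K p q))
  simpa [dotProduct, Matrix.mulVec, sum_add_distrib] using h

lemma hasDerivAt_sum_dotProduct_mulVec_sum {ι : Type*} [Fintype ι]
    {K : Matrix (Fin d) (Fin d) ℝ} (hK : Kᵀ = -K) {D : Matrix ι ι ℝ} (hD : Dᵀ = -D)
    {z : ι → ℝ → Fin d → ℝ} {z' : ι → Fin d → ℝ} {τ : ℝ} (hz : ∀ j, HasDerivAt (z j) (z' j) τ) :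
    HasDerivAt (fun t => ∑ j, z j t ⬝ᵥ K *ᵥ ∑ k, D j k • z k t)
      (2 * ∑ j, z' j ⬝ᵥ K *ᵥ ∑ k, D j k • z k τ) τ := by
  have h : HasDerivAt (fun t => ∑ j, z j t ⬝ᵥ K *ᵥ ∑ k, D j k • z k t)
      (∑ j, (z' j ⬝ᵥ K *ᵥ ∑ k, D j k • z k τ + z j τ ⬝ᵥ K *ᵥ ∑ k, D j k • z' k)) τ :=
    HasDerivAt.fun_sum fun j _ => (hz j).dotProduct_mulVec K
      (HasDerivAt.fun_sum fun k _ => (hz k).const_smul (D j k))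
  rwa [sum_add_distrib, sum_dotProduct_mulVec_sum_comm hK hD (fun j => z j τ) z', ← two_mul] at h

variable {N Mt : ℕ}

noncomputable def discreteEnergy (S : (Fin d → ℝ) → ℝ → ℝ → ℝ) (K L : Matrix (Fin d) (Fin d) ℝ)
    (Dx : Matrix (Fin N) (Fin N) ℝ) (Dy : Matrix (Fin Mt) (Fin Mt) ℝ) (x : Fin N → ℝ)
    (y : Fin Mt → ℝ) (w : Fin N → Fin Mt → Fin d → ℝ) : ℝ :=
  ∑ j, ∑ l, (S (w j l) (x j) (y l) - (1/2) * (w j l ⬝ᵥ K *ᵥ ∑ k, Dx j k • w k l)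
    - (1/2) * (w j l ⬝ᵥ L *ᵥ ∑ m, Dy l m • w j m))

lemma hasDerivAt_discreteEnergy {S : (Fin d → ℝ) → ℝ → ℝ → ℝ}
    {K L : Matrix (Fin d) (Fin d) ℝ} (hK : Kᵀ = -K) (hL : Lᵀ = -L)
    {Dx : Matrix (Fin N) (Fin N) ℝ} (hDx : Dxᵀ = -Dx) {Dy : Matrix (Fin Mt) (Fin Mt) ℝ}
    (hDy : Dyᵀ = -Dy) (x : Fin N → ℝ) (y : Fin Mt → ℝ) {z : Fin N → Fin Mt → ℝ → Fin d → ℝ}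
    {z' g : Fin N → Fin Mt → Fin d → ℝ} {τ : ℝ} (hz : ∀ j l, HasDerivAt (z j l) (z' j l) τ)
    (hS : ∀ j l, HasFDerivAt (fun w => S w (x j) (y l)) (dotCLM (g j l)) (z j l τ)) :
    HasDerivAt (fun t => discreteEnergy S K L Dx Dy x y fun j l => z j l t)
      (∑ j, ∑ l, z' j l ⬝ᵥ (g j l - K *ᵥ ∑ k, Dx j k • z k l τ - L *ᵥ ∑ m, Dy l m • z j m τ))
      τ := by
  have hSz : ∀ j l, HasDerivAt (fun t => S (z j l t) (x j) (y l)) (g j l ⬝ᵥ z' j l) τ :=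
    fun j l => by simpa [Function.comp_def, dotCLM_apply] using
      (hS j l).comp_hasDerivAt τ (hz j l)
  have hX := HasDerivAt.fun_sum fun l (_ : l ∈ univ) =>
    hasDerivAt_sum_dotProduct_mulVec_sum hK hDx fun j => hz j l
  have hY := HasDerivAt.fun_sum fun j (_ : j ∈ univ) =>
    hasDerivAt_sum_dotProduct_mulVec_sum hL hDy fun l => hz j l
  have hE : (fun t => discreteEnergy S K L Dx Dy x y fun j l => z j l t) = fun t =>
      ∑ j, ∑ l, S (z j l t) (x j) (y l)
        - (1/2) * ∑ l, ∑ j, z j l t ⬝ᵥ K *ᵥ ∑ k, Dx j k • z k l t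
        - (1/2) * ∑ j, ∑ l, z j l t ⬝ᵥ L *ᵥ ∑ m, Dy l m • z j m t := by
    funext t
    simp only [discreteEnergy, sum_sub_distrib, mul_sum]
    rw [sum_comm (γ := Fin Mt)]
  rw [hE]
  refine (((HasDerivAt.fun_sum fun j (_ : j ∈ univ) => HasDerivAt.fun_sum
    fun l (_ : l ∈ univ) => hSz j l).sub (hX.const_mul (1/2))).sub
      (hY.const_mul (1/2))).congr_deriv ?_
  simp only [dotProduct_sub, sum_sub_distrib, mul_sum, ← mul_assoc, dotProduct_comm (g _ _)]
  rw [sum_comm (γ := Fin Mt)]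
  norm_num

end Energy

theorem stmt9_general {s d N Mt : ℕ} (hs : 1 ≤ s) (c : Fin s → ℝ) (hc : Function.Injective c)
    (hb : ∀ i, bw c i ≠ 0)
    (M K L : Matrix (Fin d) (Fin d) ℝ) (hM : Mᵀ = -M) (hK : Kᵀ = -K) (hL : Lᵀ = -L)
    (S : (Fin d → ℝ) → ℝ → ℝ → ℝ) (gradS : (Fin d → ℝ) → ℝ → ℝ → (Fin d → ℝ))
    (hS : ∀ (x y : ℝ) (w : Fin d → ℝ), HasFDerivAt (fun w' => S w' x y) (dotCLM (gradS w x y)) w)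
    (Dx : Matrix (Fin N) (Fin N) ℝ) (hDx : Dxᵀ = -Dx)
    (Dy : Matrix (Fin Mt) (Fin Mt) ℝ) (hDy : Dyᵀ = -Dy)
    (x : Fin N → ℝ) (y : Fin Mt → ℝ) (Δt : ℝ)
    (δtz : Fin N → Fin Mt → ℝ → (Fin d → ℝ))
    (hδtc : ∀ j l, ContinuousOn (δtz j l) (Set.Icc 0 1))
    (z0 : Fin N → Fin Mt → Fin d → ℝ) (z : Fin N → Fin Mt → ℝ → (Fin d → ℝ))
    (hz : ∀ j l τ, z j l τ = z0 j l + Δt • ∫ σ in (0:ℝ)..1, Acrk c τ σ • δtz j l σ)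
    (z1 : Fin N → Fin Mt → Fin d → ℝ)
    (hz1 : ∀ j l, z1 j l = z0 j l + Δt • ∫ σ in (0:ℝ)..1, δtz j l σ)
    (δxz δyz : Fin N → Fin Mt → ℝ → (Fin d → ℝ))
    (hδx : ∀ j l τ, δxz j l τ = ∑ k, Dx j k • z k l τ)
    (hδy : ∀ j l τ, δyz j l τ = ∑ m, Dy l m • z j m τ)
    (hcoll : ∀ j l, ∀ τ ∈ Set.Icc (0:ℝ) 1,
      M.mulVec (δtz j l τ) + K.mulVec (δxz j l τ) + L.mulVec (δyz j l τ)
        = gradS (z j l τ) (x j) (y l))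
    (E0 E1 : Fin N → Fin Mt → ℝ)
    (hE0 : ∀ j l, E0 j l = S (z j l 0) (x j) (y l)
        - (1/2) * dotProduct (z j l 0) (K.mulVec (∑ k, Dx j k • z k l 0))
        - (1/2) * dotProduct (z j l 0) (L.mulVec (∑ m, Dy l m • z j m 0)))
    (hE1 : ∀ j l, E1 j l = S (z1 j l) (x j) (y l)
        - (1/2) * dotProduct (z1 j l) (K.mulVec (∑ k, Dx j k • z1 k l))
        - (1/2) * dotProduct (z1 j l) (L.mulVec (∑ m, Dy l m • z1 j m))) :
    ∑ j, ∑ l, E1 j l = ∑ j, ∑ l, E0 j l := by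
  have : Nonempty (Fin s) := ⟨⟨0, hs⟩⟩
  rw [← Set.uIcc_of_le zero_le_one] at hδtc hcoll
  have hzd : ∀ j l τ, HasDerivAt (z j l) (Δt • lagAvg c (δtz j l) τ) τ := fun j l τ => by
    rw [funext (hz j l)]
    exact ((hasDerivAt_integral_Acrk_smul (hδtc j l) τ).const_smul Δt).const_add _
  have hz1' : ∀ j l, z j l 1 = z1 j l := fun j l => by
    simp only [hz, hz1, Acrk_one hc hb, one_smul]
  have hE : ∀ τ ∈ Set.uIcc (0:ℝ) 1,
      HasDerivAt (fun t => discreteEnergy S K L Dx Dy x y fun j l => z j l t)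
        (∑ j, ∑ l, Δt * (lagAvg c (δtz j l) τ ⬝ᵥ M *ᵥ δtz j l τ)) τ := fun τ hτ =>
    (hasDerivAt_discreteEnergy hK hL hDx hDy x y (fun j l => hzd j l τ)
      fun j l => hS _ _ _).congr_deriv <| by
        simp only [← hδx, ← hδy, ← hcoll _ _ τ hτ, sub_sub, add_assoc, add_sub_cancel_right,
          smul_dotProduct, smul_eq_mul]
  have hFTC := intervalIntegral.integral_eq_sub_of_hasDerivAt hE
    (ContinuousOn.intervalIntegrable (by fun_prop))
  simp (disch := exact fun _ _ => ContinuousOn.intervalIntegrable (by fun_prop)) only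
    [intervalIntegral.integral_finsetSum, intervalIntegral.integral_const_mul,
      integral_lagAvg_dotProduct_mulVec_eq_zero hM hb (hδtc _ _), mul_zero, sum_const_zero] at hFTC
  calc ∑ j, ∑ l, E1 j l = discreteEnergy S K L Dx Dy x y fun j l => z j l 1 := by
        simp only [hE1, discreteEnergy, hz1']
    _ = discreteEnergy S K L Dx Dy x y fun j l => z j l 0 := by linarith
    _ = ∑ j, ∑ l, E0 j l := by simp only [hE0, discreteEnergy]

theorem stmt9 {s d N Mt : ℕ} (hs : 1 ≤ s) (c : Fin s → ℝ) (hc : Function.Injective c)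
    (hb : ∀ i, bw c i ≠ 0)
    (M K L : Matrix (Fin d) (Fin d) ℝ) (hM : Mᵀ = -M) (hK : Kᵀ = -K) (hL : Lᵀ = -L)
    (S : (Fin d → ℝ) → ℝ → ℝ → ℝ) (gradS : (Fin d → ℝ) → ℝ → ℝ → (Fin d → ℝ))
    (hS : ∀ (x y : ℝ) (w : Fin d → ℝ), HasFDerivAt (fun w' => S w' x y) (dotCLM (gradS w x y)) w)
    (hSc : ∀ x y : ℝ, Continuous fun w => gradS w x y)
    (Dx : Matrix (Fin N) (Fin N) ℝ) (hDx : Dxᵀ = -Dx)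
    (Dy : Matrix (Fin Mt) (Fin Mt) ℝ) (hDy : Dyᵀ = -Dy)
    (x : Fin N → ℝ) (y : Fin Mt → ℝ) (Δt : ℝ) (hΔt : 0 < Δt)
    (δtz : Fin N → Fin Mt → ℝ → (Fin d → ℝ))
    (hδtc : ∀ j l, ContinuousOn (δtz j l) (Set.Icc 0 1))
    (z0 : Fin N → Fin Mt → Fin d → ℝ) (z : Fin N → Fin Mt → ℝ → (Fin d → ℝ))
    (hz : ∀ j l τ, z j l τ = z0 j l + Δt • ∫ σ in (0:ℝ)..1, Acrk c τ σ • δtz j l σ)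
    (z1 : Fin N → Fin Mt → Fin d → ℝ)
    (hz1 : ∀ j l, z1 j l = z0 j l + Δt • ∫ σ in (0:ℝ)..1, δtz j l σ)
    (δxz δyz : Fin N → Fin Mt → ℝ → (Fin d → ℝ))
    (hδx : ∀ j l τ, δxz j l τ = ∑ k, Dx j k • z k l τ)
    (hδy : ∀ j l τ, δyz j l τ = ∑ m, Dy l m • z j m τ)
    (hcoll : ∀ j l, ∀ τ ∈ Set.Icc (0:ℝ) 1,
      M.mulVec (δtz j l τ) + K.mulVec (δxz j l τ) + L.mulVec (δyz j l τ)
        = gradS (z j l τ) (x j) (y l))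
    (E0 E1 : Fin N → Fin Mt → ℝ)
    (hE0 : ∀ j l, E0 j l = S (z j l 0) (x j) (y l)
        - (1/2) * dotProduct (z j l 0) (K.mulVec (∑ k, Dx j k • z k l 0))
        - (1/2) * dotProduct (z j l 0) (L.mulVec (∑ m, Dy l m • z j m 0)))
    (hE1 : ∀ j l, E1 j l = S (z1 j l) (x j) (y l)
        - (1/2) * dotProduct (z1 j l) (K.mulVec (∑ k, Dx j k • z1 k l))
        - (1/2) * dotProduct (z1 j l) (L.mulVec (∑ m, Dy l m • z1 j m))) :
    ∑ j, ∑ l, E1 j l = ∑ j, ∑ l, E0 j l :=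
  stmt9_general hs c hc hb M K L hM hK hL S gradS hS Dx hDx Dy hDy x y Δt δtz hδtc z0 z hz z1 hz1
    δxz δyz hδx hδy hcoll E0 E1 hE0 hE1
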